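/- Let Λ be a row-finite strongly aperiodic k-graph with no sources. For every v ∈ Λ^0, the set S(v) = {χ ∈ χ_Λ : v ∈ χ} is a compact subset of χ_Λ in the topology generated by {S(w) : w ∈ Λ^0}. -/

import Mathlib

set_option autoImplicit false

open scoped Classical

/-- A `k`-graph: a countable small category together with a degree functor
`d : Λ → ℕ^k` satisfying the unique factorization property.  Paths (morphisms)
form a single type; vertices (objects) are identified with the paths of
degree `0`. -/
structure KGraph (k : ℕ) where
  /-- the type of paths (morphisms) of the `k`-graph -/
  Path : Type
  countable : Countable Path
  nonempty : Nonempty Path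
  /-- the range (codomain) vertex of a path -/
  r : Path → Path
  /-- the source (domain) vertex of a path -/
  s : Path → Path
  /-- composition: `comp lam mu` is the path `λμ`, meaningful when `s lam = r mu` -/
  comp : Path → Path → Path
  /-- the degree functor -/
  d : Path → Fin k → ℕ
  d_r : ∀ lam, d (r lam) = 0
  d_s : ∀ lam, d (s lam) = 0
  r_r : ∀ lam, r (r lam) = r lam
  s_r : ∀ lam, s (r lam) = r lam
  r_s : ∀ lam, r (s lam) = s lam
  s_s : ∀ lam, s (s lam) = s lam
  id_comp : ∀ lam, comp (r lam) lam = lam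
  comp_id : ∀ lam, comp lam (s lam) = lam
  r_comp : ∀ lam mu, s lam = r mu → r (comp lam mu) = r lam
  s_comp : ∀ lam mu, s lam = r mu → s (comp lam mu) = s mu
  d_comp : ∀ lam mu, s lam = r mu → d (comp lam mu) = d lam + d mu
  comp_assoc : ∀ lam mu nu, s lam = r mu → s mu = r nu →
    comp (comp lam mu) nu = comp lam (comp mu nu)
  /-- the unique factorization property -/
  factor : ∀ lam (m n : Fin k → ℕ), d lam = m + n →
    ∃! p : Path × Path, s p.1 = r p.2 ∧ comp p.1 p.2 = lam ∧ d p.1 = m ∧ d p.2 = n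

namespace KGraph

variable {k : ℕ}

/-- `v` is a vertex, i.e. an element of `Λ⁰`. -/
def IsVertex (Λ : KGraph k) (v : Λ.Path) : Prop := Λ.d v = 0

/-- `v ≤ w`, i.e. `vΛw ≠ ∅`. -/
def Conn (Λ : KGraph k) (v w : Λ.Path) : Prop := ∃ lam, Λ.r lam = v ∧ Λ.s lam = w

/-- the canonical generator `e i` of `ℕ^k`. -/
def eVec (k : ℕ) (i : Fin k) : Fin k → ℕ := Pi.single i 1

/-- `Λ` is row-finite: `vΛⁿ` is finite for every vertex `v` and `n ∈ ℕ^k`. -/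
def RowFinite (Λ : KGraph k) : Prop :=
  ∀ v, Λ.IsVertex v → ∀ n : Fin k → ℕ, {lam | Λ.r lam = v ∧ Λ.d lam = n}.Finite

/-- `Λ` has no sources: `vΛ^{e i} ≠ ∅` for every vertex `v` and `i`. -/
def NoSources (Λ : KGraph k) : Prop :=
  ∀ v, Λ.IsVertex v → ∀ i : Fin k, ∃ lam, Λ.r lam = v ∧ Λ.d lam = eVec k i

/-- the middle factor `λ(m,n)`: the unique `σ` such that `λ = μστ` with
`d μ = m`, `d σ = n - m`, `d τ = d λ - n` (junk value if no factorization exists). -/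
noncomputable def seg (Λ : KGraph k) (lam : Λ.Path) (m n : Fin k → ℕ) : Λ.Path :=
  if h : ∃ sig, ∃ mu tau, Λ.s mu = Λ.r sig ∧ Λ.s sig = Λ.r tau ∧
      Λ.comp (Λ.comp mu sig) tau = lam ∧ Λ.d mu = m ∧ Λ.d sig = n - m ∧
      Λ.d tau = Λ.d lam - n
  then h.choose else lam

/-- `Λ` has no local periodicity at the vertex `v`. -/
def NoLocalPeriodicity (Λ : KGraph k) (v : Λ.Path) : Prop :=
  ∀ m n : Fin k → ℕ, m ≠ n →
    ∃ lam, Λ.r lam = v ∧ m ⊔ n ≤ Λ.d lam ∧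
      Λ.seg lam m (m + Λ.d lam - (m ⊔ n)) ≠ Λ.seg lam n (n + Λ.d lam - (m ⊔ n))

/-- `Λ` is aperiodic: no vertex has local periodicity. -/
def Aperiodic (Λ : KGraph k) : Prop := ∀ v, Λ.IsVertex v → Λ.NoLocalPeriodicity v

/-- a hereditary set of vertices -/
def Hereditary (Λ : KGraph k) (H : Set Λ.Path) : Prop :=
  ∀ v ∈ H, ∀ w, Λ.Conn v w → w ∈ H

/-- a saturated set of vertices -/
def Saturated (Λ : KGraph k) (H : Set Λ.Path) : Prop :=
  ∀ v, Λ.IsVertex v → (∃ mu, Λ.r mu = v) →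
    (∃ i : Fin k, ∀ lam, Λ.r lam = v → Λ.d lam = eVec k i → Λ.s lam ∈ H) → v ∈ H

/-- the saturation of a set of vertices: the smallest saturated set containing it -/
def saturation (Λ : KGraph k) (H : Set Λ.Path) : Set Λ.Path :=
  ⋂₀ {K : Set Λ.Path | H ⊆ K ∧ Λ.Saturated K}

/-- no local periodicity at the vertex `v` of the quotient graph `Γ(Λ \ H)`
(whose paths are the paths of `Λ` with source outside `H`). -/
def QuotNoLocalPeriodicity (Λ : KGraph k) (H : Set Λ.Path) (v : Λ.Path) : Prop :=
  ∀ m n : Fin k → ℕ, m ≠ n →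
    ∃ lam, Λ.r lam = v ∧ Λ.s lam ∉ H ∧ m ⊔ n ≤ Λ.d lam ∧
      Λ.seg lam m (m + Λ.d lam - (m ⊔ n)) ≠ Λ.seg lam n (n + Λ.d lam - (m ⊔ n))

/-- `Λ` is strongly aperiodic: `Γ(Λ \ H)` is aperiodic for every saturated
hereditary proper subset `H ⊊ Λ⁰`. -/
def StronglyAperiodic (Λ : KGraph k) : Prop :=
  ∀ H : Set Λ.Path, (∀ v ∈ H, Λ.IsVertex v) → Λ.Hereditary H → Λ.Saturated H →
    H ≠ {v | Λ.IsVertex v} →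
    ∀ v, Λ.IsVertex v → v ∉ H → Λ.QuotNoLocalPeriodicity H v

/-- a maximal tail -/
def MaximalTail (Λ : KGraph k) (γ : Set Λ.Path) : Prop :=
  γ.Nonempty ∧ (∀ v ∈ γ, Λ.IsVertex v) ∧
  (∀ v₁ ∈ γ, ∀ v₂ ∈ γ, ∃ w ∈ γ, Λ.Conn v₁ w ∧ Λ.Conn v₂ w) ∧
  (∀ v ∈ γ, ∀ i : Fin k, ∃ f, Λ.r f = v ∧ Λ.d f = eVec k i ∧ Λ.s f ∈ γ) ∧
  (∀ v, Λ.IsVertex v → ∀ w ∈ γ, Λ.Conn v w → v ∈ γ)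

end KGraph

namespace KGraph

variable {k : ℕ}

/-- An infinite path in `Λ`: a degree-preserving functor `x : Ω_k → Λ`,
recorded by its values `x(m,n)` for `m ≤ n` in `ℕ^k`. -/
structure InfinitePath (Λ : KGraph k) where
  toFun : (Fin k → ℕ) → (Fin k → ℕ) → Λ.Path
  d_eq : ∀ m n : Fin k → ℕ, m ≤ n → Λ.d (toFun m n) = n - m
  r_eq : ∀ m n : Fin k → ℕ, m ≤ n → Λ.r (toFun m n) = toFun m m
  s_eq : ∀ m n : Fin k → ℕ, m ≤ n → Λ.s (toFun m n) = toFun n n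
  comp_eq : ∀ m n p : Fin k → ℕ, m ≤ n → n ≤ p →
    Λ.comp (toFun m n) (toFun n p) = toFun m p

/-- `β(x) = {v ∈ Λ⁰ : vΛx(n,n) ≠ ∅ for some n ∈ ℕ^k}`. -/
def tailOf (Λ : KGraph k) (x : Λ.InfinitePath) : Set Λ.Path :=
  {v | Λ.IsVertex v ∧ ∃ n : Fin k → ℕ, Λ.Conn v (x.toFun n n)}

/-- the cylinder set `Z(μ) = {x ∈ Λ^∞ : x(0, d(μ)) = μ}`. -/
def cyl (Λ : KGraph k) (mu : Λ.Path) : Set Λ.InfinitePath :=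
  {x | x.toFun 0 (Λ.d mu) = mu}

/-- the topology on `Λ^∞` generated by the cylinder sets -/
instance instTopInfinitePath (Λ : KGraph k) : TopologicalSpace Λ.InfinitePath :=
  TopologicalSpace.generateFrom {U | ∃ mu : Λ.Path, U = Λ.cyl mu}

/-- `χ_Λ`, the set of maximal tails of `Λ` -/
def MaxTail (Λ : KGraph k) : Type := {γ : Set Λ.Path // Λ.MaximalTail γ}

/-- `S(v) = {χ ∈ χ_Λ : v ∈ χ}`. -/
def Sv (Λ : KGraph k) (v : Λ.Path) : Set Λ.MaxTail := {χ | v ∈ χ.1}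

/-- the topology on `χ_Λ` generated by the sets `S(v)`, `v ∈ Λ⁰` -/
instance instTopMaxTail (Λ : KGraph k) : TopologicalSpace Λ.MaxTail :=
  TopologicalSpace.generateFrom {U | ∃ v, Λ.IsVertex v ∧ U = Λ.Sv v}

end KGraph

/-
The set `S(v)` is the image of the cylinder `Z(v)` under the map `x ↦ β(x)` sending an infinite
path to the maximal tail of vertices that it reaches. This map is continuous: `v ∈ β(x)` is
witnessed by a finite initial segment of `x`. The cylinder `Z(v)` is compact by row-finiteness:
an ultrafilter on `Z(v)` concentrates on one of the finitely many paths `x(0, n) ∈ vΛⁿ` for each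
`n`, and these paths fit together to form the limit point. Finally every maximal tail `γ ∋ v`
equals `β(x)` for some `x ∈ Z(v)`: enumerate `γ`, and extend a path from `v` step by step inside
`γ`, in every coordinate direction at each step, so that it eventually reaches below every
vertex of `γ`.
-/

namespace KGraph

variable {k : ℕ} {Λ : KGraph k}

section Factorization

lemma factor_unique {a b a' b' : Λ.Path} (hs : Λ.s a = Λ.r b) (hs' : Λ.s a' = Λ.r b')
    (hc : Λ.comp a b = Λ.comp a' b') (hd : Λ.d a = Λ.d a') : a = a' ∧ b = b' := by
  have hdb : Λ.d b = Λ.d b' := by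
    have h := Λ.d_comp a b hs
    rw [hc, Λ.d_comp a' b' hs', hd] at h
    exact (add_left_cancel h).symm
  have h := (Λ.factor (Λ.comp a b) (Λ.d a) (Λ.d b) (Λ.d_comp a b hs)).unique
    (y₁ := (a, b)) (y₂ := (a', b')) ⟨hs, rfl, rfl, rfl⟩ ⟨hs', hc.symm, hd.symm, hdb.symm⟩
  exact Prod.ext_iff.mp h

lemma IsVertex.r_eq {v : Λ.Path} (hv : Λ.IsVertex v) : Λ.r v = v :=
  (factor_unique (Λ.s_r v) (Λ.r_s v).symm (by rw [Λ.id_comp, Λ.comp_id])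
    (by rw [Λ.d_r, hv])).1

lemma IsVertex.s_eq {v : Λ.Path} (hv : Λ.IsVertex v) : Λ.s v = v := by
  rw [← hv.r_eq, Λ.s_r]

lemma conn_self {v : Λ.Path} (hv : Λ.IsVertex v) : Λ.Conn v v := ⟨v, hv.r_eq, hv.s_eq⟩

lemma Conn.trans {u v w : Λ.Path} (huv : Λ.Conn u v) (hvw : Λ.Conn v w) : Λ.Conn u w := by
  obtain ⟨a, rfl, rfl⟩ := huv
  obtain ⟨b, hb, rfl⟩ := hvw
  exact ⟨Λ.comp a b, Λ.r_comp a b hb.symm, Λ.s_comp a b hb.symm⟩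

def IsPrefix (Λ : KGraph k) (a b : Λ.Path) : Prop := ∃ ρ, Λ.s a = Λ.r ρ ∧ Λ.comp a ρ = b

lemma isPrefix_comp {a b : Λ.Path} (h : Λ.s a = Λ.r b) : Λ.IsPrefix a (Λ.comp a b) := ⟨b, h, rfl⟩

lemma isPrefix_refl (a : Λ.Path) : Λ.IsPrefix a a := ⟨Λ.s a, (Λ.r_s a).symm, Λ.comp_id a⟩

lemma IsPrefix.trans {a b c : Λ.Path} (hab : Λ.IsPrefix a b) (hbc : Λ.IsPrefix b c) :
    Λ.IsPrefix a c := by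
  obtain ⟨ρ, hρ, rfl⟩ := hab
  obtain ⟨σ, hσ, rfl⟩ := hbc
  have hρσ : Λ.s ρ = Λ.r σ := by rw [← hσ, Λ.s_comp _ _ hρ]
  exact ⟨Λ.comp ρ σ, by rw [Λ.r_comp _ _ hρσ, hρ], (Λ.comp_assoc _ _ _ hρ hρσ).symm⟩

lemma IsPrefix.r_eq {a b : Λ.Path} (h : Λ.IsPrefix a b) : Λ.r a = Λ.r b := by
  obtain ⟨ρ, hρ, rfl⟩ := h
  exact (Λ.r_comp _ _ hρ).symm

lemma IsPrefix.conn_s {a b : Λ.Path} (h : Λ.IsPrefix a b) : Λ.Conn (Λ.s a) (Λ.s b) := by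
  obtain ⟨ρ, hρ, rfl⟩ := h
  exact ⟨ρ, hρ.symm, (Λ.s_comp _ _ hρ).symm⟩

/-- The factorization of `lam` with first factor of degree `m`; a junk value unless
`m ≤ d lam`. -/
noncomputable def factorAt (Λ : KGraph k) (lam : Λ.Path) (m : Fin k → ℕ) : Λ.Path × Λ.Path :=
  if h : ∃ p : Λ.Path × Λ.Path, Λ.s p.1 = Λ.r p.2 ∧ Λ.comp p.1 p.2 = lam ∧ Λ.d p.1 = m
  then h.choose else (lam, lam)

lemma factorAt_spec {lam : Λ.Path} {m : Fin k → ℕ} (hm : m ≤ Λ.d lam) :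
    Λ.s (Λ.factorAt lam m).1 = Λ.r (Λ.factorAt lam m).2 ∧
      Λ.comp (Λ.factorAt lam m).1 (Λ.factorAt lam m).2 = lam ∧
      Λ.d (Λ.factorAt lam m).1 = m := by
  have hex : ∃ p : Λ.Path × Λ.Path, Λ.s p.1 = Λ.r p.2 ∧ Λ.comp p.1 p.2 = lam ∧ Λ.d p.1 = m := by
    obtain ⟨p, ⟨hs, hc, hd, -⟩, -⟩ := Λ.factor lam m (Λ.d lam - m) (add_tsub_cancel_of_le hm).symm
    exact ⟨p, hs, hc, hd⟩
  rw [factorAt, dif_pos hex]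
  exact hex.choose_spec

lemma factorAt_eq {lam a b : Λ.Path} {m : Fin k → ℕ} (hs : Λ.s a = Λ.r b)
    (hc : Λ.comp a b = lam) (hd : Λ.d a = m) : Λ.factorAt lam m = (a, b) := by
  have hm : m ≤ Λ.d lam := by rw [← hc, Λ.d_comp a b hs, hd]; exact le_self_add
  obtain ⟨hs', hc', hd'⟩ := factorAt_spec hm
  exact Prod.ext_iff.mpr (factor_unique hs' hs (hc'.trans hc.symm) (hd'.trans hd.symm))

lemma factorAt_zero (lam : Λ.Path) : Λ.factorAt lam 0 = (Λ.r lam, lam) :=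
  factorAt_eq (Λ.s_r lam) (Λ.id_comp lam) (Λ.d_r lam)

lemma factorAt_d_self (lam : Λ.Path) : Λ.factorAt lam (Λ.d lam) = (lam, Λ.s lam) :=
  factorAt_eq (Λ.r_s lam).symm (Λ.comp_id lam) rfl

lemma isPrefix_fst_factorAt {lam : Λ.Path} {m : Fin k → ℕ} (hm : m ≤ Λ.d lam) :
    Λ.IsPrefix (Λ.factorAt lam m).1 lam :=
  ⟨_, (factorAt_spec hm).1, (factorAt_spec hm).2.1⟩

lemma IsPrefix.fst_factorAt_d {a b : Λ.Path} (h : Λ.IsPrefix a b) :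
    (Λ.factorAt b (Λ.d a)).1 = a := by
  obtain ⟨ρ, hρ, rfl⟩ := h
  rw [factorAt_eq hρ rfl rfl]

lemma IsPrefix.fst_factorAt_eq {a b : Λ.Path} {m : Fin k → ℕ} (h : Λ.IsPrefix a b)
    (hm : m ≤ Λ.d a) : (Λ.factorAt b m).1 = (Λ.factorAt a m).1 := by
  have key := ((isPrefix_fst_factorAt hm).trans h).fst_factorAt_d
  rwa [(factorAt_spec hm).2.2] at key

end Factorization

/-- The initial segments `x(0, n)` of an infinite path `x`, abstractly. -/
structure CoherentFamily (Λ : KGraph k) where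
  toFun : (Fin k → ℕ) → Λ.Path
  d_toFun : ∀ n, Λ.d (toFun n) = n
  isPrefix : ∀ ⦃m n⦄, m ≤ n → Λ.IsPrefix (toFun m) (toFun n)

namespace CoherentFamily

variable (c : CoherentFamily Λ)

lemma fst_factorAt {m n : Fin k → ℕ} (h : m ≤ n) : (Λ.factorAt (c.toFun n) m).1 = c.toFun m := by
  have key := (c.isPrefix h).fst_factorAt_d
  rwa [c.d_toFun] at key

lemma factorAt_spec {m n : Fin k → ℕ} (h : m ≤ n) :
    Λ.s (c.toFun m) = Λ.r (Λ.factorAt (c.toFun n) m).2 ∧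
      Λ.comp (c.toFun m) (Λ.factorAt (c.toFun n) m).2 = c.toFun n := by
  have key := KGraph.factorAt_spec (lam := c.toFun n) (m := m) (by rw [c.d_toFun]; exact h)
  rw [c.fst_factorAt h] at key
  exact ⟨key.1, key.2.1⟩

lemma snd_factorAt_self (n : Fin k → ℕ) : (Λ.factorAt (c.toFun n) n).2 = Λ.s (c.toFun n) := by
  have key := factorAt_d_self (c.toFun n)
  rw [c.d_toFun] at key
  rw [key]

noncomputable def toInfinitePath : Λ.InfinitePath where
  toFun m n := (Λ.factorAt (c.toFun n) m).2
  d_eq m n h := by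
    obtain ⟨hs, hc⟩ := c.factorAt_spec h
    have hd := Λ.d_comp _ _ hs
    rw [hc, c.d_toFun, c.d_toFun] at hd
    exact eq_tsub_of_add_eq (by rw [add_comm]; exact hd.symm)
  r_eq m n h := by rw [c.snd_factorAt_self, ← (c.factorAt_spec h).1]
  s_eq m n h := by
    obtain ⟨hs, hc⟩ := c.factorAt_spec h
    rw [c.snd_factorAt_self]
    exact (Λ.s_comp _ _ hs).symm.trans (congrArg Λ.s hc)
  comp_eq m n p hmn hnp := by
    obtain ⟨hs₁, hc₁⟩ := c.factorAt_spec hmn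
    obtain ⟨hs₂, hc₂⟩ := c.factorAt_spec hnp
    have hs₁₂ : Λ.s (Λ.factorAt (c.toFun n) m).2 = Λ.r (Λ.factorAt (c.toFun p) n).2 := by
      exact (Λ.s_comp _ _ hs₁).symm.trans ((congrArg Λ.s hc₁).trans hs₂)
    have hfac := factorAt_eq (lam := c.toFun p) (by rw [Λ.r_comp _ _ hs₁₂]; exact hs₁)
      (by rw [← Λ.comp_assoc _ _ _ hs₁ hs₁₂, hc₁, hc₂]) (c.d_toFun m)
    rw [hfac]

lemma toInfinitePath_zero (n : Fin k → ℕ) : c.toInfinitePath.toFun 0 n = c.toFun n := by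
  show (Λ.factorAt (c.toFun n) 0).2 = c.toFun n
  rw [factorAt_zero]

lemma toInfinitePath_mem_cyl (n : Fin k → ℕ) : c.toInfinitePath ∈ Λ.cyl (c.toFun n) := by
  show c.toInfinitePath.toFun 0 (Λ.d (c.toFun n)) = c.toFun n
  rw [c.d_toFun, toInfinitePath_zero]

end CoherentFamily

section InfinitePaths

lemma conn_toFun_diag (x : Λ.InfinitePath) {m n : Fin k → ℕ} (h : m ≤ n) :
    Λ.Conn (x.toFun m m) (x.toFun n n) :=
  ⟨x.toFun m n, x.r_eq m n h, x.s_eq m n h⟩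

lemma mem_tailOf_toFun_diag (x : Λ.InfinitePath) (n : Fin k → ℕ) :
    x.toFun n n ∈ Λ.tailOf x :=
  ⟨by rw [IsVertex, x.d_eq n n le_rfl, tsub_self], n, conn_toFun_diag x le_rfl⟩

lemma maximalTail_tailOf (x : Λ.InfinitePath) : Λ.MaximalTail (Λ.tailOf x) := by
  refine ⟨⟨_, mem_tailOf_toFun_diag x 0⟩, fun v hv => hv.1, ?_, ?_, ?_⟩
  · rintro v₁ ⟨-, n₁, h₁⟩ v₂ ⟨-, n₂, h₂⟩
    exact ⟨_, mem_tailOf_toFun_diag x (n₁ ⊔ n₂), h₁.trans (conn_toFun_diag x le_sup_left),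
      h₂.trans (conn_toFun_diag x le_sup_right)⟩
  · rintro v ⟨-, n, μ, rfl, hμ⟩ i
    -- the first edge of degree `e i` of the path `μ x(n, n + e i)`
    have hle : n ≤ n + eVec k i := le_self_add
    have hs : Λ.s μ = Λ.r (x.toFun n (n + eVec k i)) := by rw [x.r_eq n _ hle, hμ]
    have hdeg : eVec k i ≤ Λ.d (Λ.comp μ (x.toFun n (n + eVec k i))) := by
      rw [Λ.d_comp _ _ hs, x.d_eq n _ hle, add_tsub_cancel_left]; exact le_add_self
    have hpre := isPrefix_fst_factorAt hdeg
    refine ⟨_, ?_, (factorAt_spec hdeg).2.2, Λ.d_s _, n + eVec k i, hpre.conn_s.trans ?_⟩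
    · rw [hpre.r_eq, Λ.r_comp _ _ hs]
    · rw [Λ.s_comp _ _ hs, x.s_eq n _ hle]
      exact conn_toFun_diag x le_rfl
  · rintro v hv w ⟨-, n, hwn⟩ hvw
    exact ⟨hv, n, hvw.trans hwn⟩

lemma mem_cyl_of_isVertex {v : Λ.Path} (hv : Λ.IsVertex v) {x : Λ.InfinitePath} :
    x ∈ Λ.cyl v ↔ x.toFun 0 0 = v := by
  show x.toFun 0 (Λ.d v) = v ↔ _
  rw [show Λ.d v = 0 from hv]

lemma mem_cyl_toFun_zero (x : Λ.InfinitePath) (n : Fin k → ℕ) : x ∈ Λ.cyl (x.toFun 0 n) := by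
  show x.toFun 0 (Λ.d (x.toFun 0 n)) = x.toFun 0 n
  rw [x.d_eq 0 n zero_le, tsub_zero]

lemma isPrefix_of_mem_cyl {x : Λ.InfinitePath} {a b : Λ.Path} (ha : x ∈ Λ.cyl a)
    (hb : x ∈ Λ.cyl b) (hab : Λ.d a ≤ Λ.d b) : Λ.IsPrefix a b := by
  rw [← ha, ← hb]
  exact ⟨x.toFun (Λ.d a) (Λ.d b), by rw [x.s_eq 0 _ zero_le, x.r_eq _ _ hab],
    x.comp_eq 0 _ _ zero_le hab⟩

lemma isOpen_cyl (μ : Λ.Path) : IsOpen (Λ.cyl μ) :=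
  TopologicalSpace.GenerateOpen.basic _ ⟨μ, rfl⟩

end InfinitePaths

section Compactness

lemma exists_cyl_mem_ultrafilter (hrf : Λ.RowFinite) {v : Λ.Path} (hv : Λ.IsVertex v)
    {F : Ultrafilter Λ.InfinitePath} (hF : Λ.cyl v ∈ F) (n : Fin k → ℕ) :
    ∃ lam, Λ.d lam = n ∧ Λ.cyl lam ∈ F := by
  have hmaps : Λ.cyl v ⊆ (fun x : Λ.InfinitePath => x.toFun 0 n) ⁻¹'
      {lam | Λ.r lam = v ∧ Λ.d lam = n} := by
    intro x hx
    exact ⟨by rw [x.r_eq 0 n zero_le, (mem_cyl_of_isVertex hv).mp hx],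
      by rw [x.d_eq 0 n zero_le, tsub_zero]⟩
  obtain ⟨lam, ⟨-, hd⟩, hpure⟩ := Ultrafilter.eq_pure_of_finite_mem (hrf v hv n)
    (Ultrafilter.mem_map.mpr (Filter.mem_of_superset hF hmaps))
  have hlam : {lam} ∈ F.map (fun x : Λ.InfinitePath => x.toFun 0 n) := by
    rw [hpure]
    exact Ultrafilter.mem_pure.mpr rfl
  refine ⟨lam, hd, ?_⟩
  rw [cyl, hd]
  exact Ultrafilter.mem_map.mp hlam

theorem isCompact_cyl (hrf : Λ.RowFinite) {v : Λ.Path} (hv : Λ.IsVertex v) :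
    IsCompact (Λ.cyl v) := by
  refine isCompact_iff_ultrafilter_le_nhds.mpr fun F hF => ?_
  have hvF : Λ.cyl v ∈ F := Filter.le_principal_iff.mp hF
  choose lam hd hlamF using exists_cyl_mem_ultrafilter hrf hv hvF
  have hcoh : ∀ ⦃m n⦄, m ≤ n → Λ.IsPrefix (lam m) (lam n) := fun m n hmn => by
    obtain ⟨x, hxm, hxn⟩ := F.nonempty_of_mem (Filter.inter_mem (hlamF m) (hlamF n))
    exact isPrefix_of_mem_cyl hxm hxn (by rwa [hd, hd])
  let c : CoherentFamily Λ := ⟨lam, hd, hcoh⟩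
  have hlam0 : lam 0 = v := by
    obtain ⟨x, hx0, hxv⟩ := F.nonempty_of_mem (Filter.inter_mem (hlamF 0) hvF)
    rw [← hx0, ← hxv, hd, show Λ.d v = 0 from hv]
  refine ⟨c.toInfinitePath, hlam0 ▸ c.toInfinitePath_mem_cyl 0, ?_⟩
  refine TopologicalSpace.tendsto_nhds_generateFrom_iff.mpr ?_
  rintro _ ⟨μ, rfl⟩ hμ
  have hμ' : lam (Λ.d μ) = μ := (c.toInfinitePath_zero (Λ.d μ)).symm.trans hμ
  rw [← hμ']
  exact hlamF (Λ.d μ)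

end Compactness

section TailMap

def tailMap (Λ : KGraph k) (x : Λ.InfinitePath) : Λ.MaxTail :=
  ⟨Λ.tailOf x, maximalTail_tailOf x⟩

lemma isOpen_setOf_mem_tailOf (w : Λ.Path) : IsOpen {x : Λ.InfinitePath | w ∈ Λ.tailOf x} := by
  refine isOpen_iff_forall_mem_open.mpr fun x ⟨hw, n, hwx⟩ => ?_
  refine ⟨Λ.cyl (x.toFun 0 n), fun y hy => ⟨hw, n, ?_⟩, isOpen_cyl _, mem_cyl_toFun_zero x n⟩
  have hy' : y.toFun 0 n = x.toFun 0 n := by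
    have h : y.toFun 0 (Λ.d (x.toFun 0 n)) = x.toFun 0 n := hy
    rwa [x.d_eq 0 n zero_le, tsub_zero] at h
  rwa [← y.s_eq 0 n zero_le, hy', x.s_eq 0 n zero_le]

lemma continuous_tailMap : Continuous Λ.tailMap :=
  continuous_generateFrom_iff.mpr fun _ ⟨w, _, hU⟩ => hU ▸ isOpen_setOf_mem_tailOf w

end TailMap

section MaximalTails

lemma exists_mem_cyl_of_isPrefix_chain {μ : ℕ → Λ.Path}
    (hchain : ∀ j, Λ.IsPrefix (μ j) (μ (j + 1))) (hunbdd : ∀ n, ∃ j, n ≤ Λ.d (μ j)) :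
    ∃ x : Λ.InfinitePath, ∀ j, x ∈ Λ.cyl (μ j) := by
  have hmono : ∀ ⦃a b⦄, a ≤ b → Λ.IsPrefix (μ a) (μ b) := by
    intro a b hab
    induction b, hab using Nat.le_induction with
    | base => exact isPrefix_refl _
    | succ b _ ih => exact ih.trans (hchain b)
  choose J hJ using hunbdd
  have hfst : ∀ n j, n ≤ Λ.d (μ j) → (Λ.factorAt (μ (J n)) n).1 = (Λ.factorAt (μ j) n).1 := by
    intro n j hj
    rcases le_total (J n) j with h | h
    · exact ((hmono h).fst_factorAt_eq (hJ n)).symm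
    · exact (hmono h).fst_factorAt_eq hj
  let c : CoherentFamily Λ :=
    { toFun := fun n => (Λ.factorAt (μ (J n)) n).1
      d_toFun := fun n => (factorAt_spec (hJ n)).2.2
      isPrefix := fun m n hmn => by
        have hm : m ≤ Λ.d (Λ.factorAt (μ (J n)) n).1 := by rwa [(factorAt_spec (hJ n)).2.2]
        show Λ.IsPrefix (Λ.factorAt (μ (J m)) m).1 (Λ.factorAt (μ (J n)) n).1
        rw [hfst m (J n) (hmn.trans (hJ n)), (isPrefix_fst_factorAt (hJ n)).fst_factorAt_eq hm]
        exact isPrefix_fst_factorAt hm }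
  refine ⟨c.toInfinitePath, fun j => ?_⟩
  have hcj : c.toFun (Λ.d (μ j)) = μ j := by
    show (Λ.factorAt (μ (J _)) _).1 = μ j
    rw [hfst _ j le_rfl, factorAt_d_self]
  rw [← hcj]
  exact c.toInfinitePath_mem_cyl _

variable {γ : Set Λ.Path}

lemma MaximalTail.exists_path_pos (hγ : Λ.MaximalTail γ) {w : Λ.Path} (hw : w ∈ γ) :
    ∃ τ, Λ.r τ = w ∧ Λ.s τ ∈ γ ∧ ∀ i, 0 < Λ.d τ i := by
  suffices h : ∀ S : Finset (Fin k), ∃ τ, Λ.r τ = w ∧ Λ.s τ ∈ γ ∧ ∀ i ∈ S, 0 < Λ.d τ i by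
    obtain ⟨τ, hr, hs, hpos⟩ := h Finset.univ
    exact ⟨τ, hr, hs, fun i => hpos i (Finset.mem_univ i)⟩
  intro S
  induction S using Finset.induction_on with
  | empty => exact ⟨w, (hγ.2.1 w hw).r_eq, by rwa [(hγ.2.1 w hw).s_eq], by simp⟩
  | insert j S _ ih =>
    obtain ⟨τ, hr, hs, hpos⟩ := ih
    obtain ⟨f, hrf, hdf, hsf⟩ := hγ.2.2.2.1 _ hs j
    refine ⟨Λ.comp τ f, by rw [Λ.r_comp _ _ hrf.symm, hr], by rwa [Λ.s_comp _ _ hrf.symm], ?_⟩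
    rw [Finset.forall_mem_insert, Λ.d_comp _ _ hrf.symm, hdf]
    simp only [Pi.add_apply]
    exact ⟨by simp [eVec], fun i hi => Nat.lt_add_right _ (hpos i hi)⟩

lemma MaximalTail.exists_extension (hγ : Λ.MaximalTail γ) {p u : Λ.Path} (hp : Λ.s p ∈ γ)
    (hu : u ∈ γ) :
    ∃ q, Λ.IsPrefix p q ∧ Λ.s q ∈ γ ∧ (∀ i, Λ.d p i < Λ.d q i) ∧ Λ.Conn u (Λ.s q) := by
  obtain ⟨w, hw, ⟨α, hrα, hsα⟩, huw⟩ := hγ.2.2.1 _ hp _ hu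
  obtain ⟨τ, hrτ, hsτ, hpos⟩ := hγ.exists_path_pos hw
  have hατ : Λ.s α = Λ.r τ := hsα.trans hrτ.symm
  have hpατ : Λ.s p = Λ.r (Λ.comp α τ) := by rw [Λ.r_comp _ _ hατ, hrα]
  have hs : Λ.s (Λ.comp p (Λ.comp α τ)) = Λ.s τ := by
    rw [Λ.s_comp _ _ hpατ, Λ.s_comp _ _ hατ]
  refine ⟨_, isPrefix_comp hpατ, by rwa [hs], fun i => ?_,
    by rw [hs]; exact huw.trans ⟨τ, hrτ, rfl⟩⟩
  rw [Λ.d_comp _ _ hpατ, Λ.d_comp _ _ hατ]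
  simp only [Pi.add_apply]
  have := hpos i
  omega

lemma MaximalTail.exists_chain (hγ : Λ.MaximalTail γ) {v : Λ.Path} (hvγ : v ∈ γ) :
    ∃ μ : ℕ → Λ.Path, μ 0 = v ∧ (∀ j, Λ.IsPrefix (μ j) (μ (j + 1))) ∧
      (∀ j i, j ≤ Λ.d (μ j) i) ∧ (∀ j, Λ.s (μ j) ∈ γ) ∧ ∀ w ∈ γ, ∃ j, Λ.Conn w (Λ.s (μ j)) := by
  have := Λ.countable
  obtain ⟨u, rfl⟩ := (Set.to_countable γ).exists_eq_range hγ.1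
  have hext : ∀ (j : ℕ) (p : {p // Λ.s p ∈ Set.range u}), ∃ q : {q // Λ.s q ∈ Set.range u},
      Λ.IsPrefix p q ∧ (∀ i, Λ.d p i < Λ.d q i) ∧ Λ.Conn (u j) (Λ.s q) := by
    intro j p
    obtain ⟨q, hpq, hq, hd, hconn⟩ := hγ.exists_extension p.2 ⟨j, rfl⟩
    exact ⟨⟨q, hq⟩, hpq, hd, hconn⟩
  choose g hg using hext
  let μ : ℕ → {p // Λ.s p ∈ Set.range u} := fun j =>
    Nat.rec (motive := fun _ => {p // Λ.s p ∈ Set.range u})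
      ⟨v, by rwa [(hγ.2.1 v hvγ).s_eq]⟩ g j
  refine ⟨fun j => (μ j).1, rfl, fun j => (hg j (μ j)).1, fun j => ?_, fun j => (μ j).2, ?_⟩
  · induction j with
    | zero => exact fun i => Nat.zero_le _
    | succ j ih => exact fun i => (ih i).trans_lt ((hg j (μ j)).2.1 i)
  · rintro _ ⟨j, rfl⟩
    exact ⟨j + 1, (hg j (μ j)).2.2⟩

theorem MaximalTail.exists_tailOf_eq (hγ : Λ.MaximalTail γ) {v : Λ.Path} (hvγ : v ∈ γ) :
    ∃ x ∈ Λ.cyl v, Λ.tailOf x = γ := by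
  obtain ⟨μ, hμ0, hchain, hgrow, hsγ, hreach⟩ := hγ.exists_chain hvγ
  have hunbdd : ∀ n, ∃ j, n ≤ Λ.d (μ j) := fun n =>
    ⟨Finset.univ.sup n, fun i => (Finset.le_sup (Finset.mem_univ i)).trans (hgrow _ i)⟩
  obtain ⟨x, hx⟩ := exists_mem_cyl_of_isPrefix_chain hchain hunbdd
  have hdiag : ∀ j, x.toFun (Λ.d (μ j)) (Λ.d (μ j)) = Λ.s (μ j) := fun j => by
    rw [← x.s_eq 0 _ zero_le]
    exact congrArg Λ.s (hx j)
  refine ⟨x, hμ0 ▸ hx 0, Set.eq_of_subset_of_subset ?_ ?_⟩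
  · rintro w ⟨hw, n, hwn⟩
    obtain ⟨j, hj⟩ := hunbdd n
    exact hγ.2.2.2.2 w hw _ (hsγ j) (hwn.trans (hdiag j ▸ conn_toFun_diag x hj))
  · intro w hw
    obtain ⟨j, hwj⟩ := hreach w hw
    exact ⟨hγ.2.1 w hw, Λ.d (μ j), by rwa [hdiag]⟩

lemma image_tailMap_cyl {v : Λ.Path} (hv : Λ.IsVertex v) : Λ.tailMap '' Λ.cyl v = Λ.Sv v := by
  ext χ
  constructor
  · rintro ⟨x, hx, rfl⟩
    exact ⟨hv, 0, by rw [(mem_cyl_of_isVertex hv).mp hx]; exact conn_self hv⟩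
  · intro hχ
    obtain ⟨x, hx, hxχ⟩ := χ.property.exists_tailOf_eq hχ
    exact ⟨x, hx, Subtype.ext hxχ⟩

end MaximalTails

end KGraph

theorem stmt15_general {k : ℕ} (Λ : KGraph k) (hrf : Λ.RowFinite) :
    ∀ v, Λ.IsVertex v → IsCompact (Λ.Sv v) := by
  intro v hv
  rw [← KGraph.image_tailMap_cyl hv]
  exact (KGraph.isCompact_cyl hrf hv).image KGraph.continuous_tailMap

/-- Each `S(v)` is a compact subset of `χ_Λ`. -/
theorem stmt15 {k : ℕ} (Λ : KGraph k) (hrf : Λ.RowFinite) (hns : Λ.NoSources)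
    (hsa : Λ.StronglyAperiodic) :
    ∀ v, Λ.IsVertex v → IsCompact (Λ.Sv v) :=
  stmt15_general Λ hrf
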